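/- arXiv:1302.4587 — 2 statements merged into one kernel-verified Lean document; each statement's English description precedes it below -/
import Mathlib

section
/- Let G be a finite simple graph with m ≥ 1 edges. If the edge weights induce a uniformly random linear order on E(G) (equivalently, the ranking of edges is a uniformly random bijection E(G) → {1,…,m}), then the expected number of removed edges satisfies E[|R|] ≥ m/2, where R is the set of edges sharing at least one endpoint with some locally maximal edge (including the locally maximal edges themselves). -/
open Classical

/-- Two edges of a graph share an endpoint. -/
def shareEndpoint {V : Type*} (e f : Sym2 V) : Prop := ∃ v, v ∈ e ∧ v ∈ f

variable {V : Type*} [Fintype V] [DecidableEq V]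

/-- The sample space of the random model: uniformly random bijections
(rankings) from the edge set `E(G)` to `{1, …, m}`, represented as
equivalences `E(G) ≃ Fin m`. -/
abbrev EdgeRanking (G : SimpleGraph V) [DecidableRel G.Adj] : Type _ :=
  {e : Sym2 V // e ∈ G.edgeFinset} ≃ Fin G.edgeFinset.card

/-- The rank of an edge under a ranking (arbitrary value on non-edges). -/
noncomputable def rk (G : SimpleGraph V) [DecidableRel G.Adj] (σ : EdgeRanking G)
    (e : Sym2 V) : ℕ :=
  if h : e ∈ G.edgeFinset then (σ ⟨e, h⟩ : ℕ) else 0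

/-- An edge `e` of `G` is locally maximal under the ranking `σ`: its rank is
larger than the rank of any other edge sharing an endpoint with it. -/
def locMaxR (G : SimpleGraph V) [DecidableRel G.Adj] (σ : EdgeRanking G)
    (e : Sym2 V) : Prop :=
  e ∈ G.edgeFinset ∧ ∀ f ∈ G.edgeFinset, f ≠ e → shareEndpoint e f → rk G σ f < rk G σ e

/-- The removed set `R`: all edges sharing at least one endpoint with some locally
maximal edge (including the locally maximal edges themselves). -/
noncomputable def removedR (G : SimpleGraph V) [DecidableRel G.Adj] (σ : EdgeRanking G) :
    Finset (Sym2 V) :=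
  G.edgeFinset.filter (fun f => ∃ e, locMaxR G σ e ∧ shareEndpoint e f)

/-!
An edge `e` is locally maximal exactly when it has the top rank in its closed edge
neighbourhood `N(e)` (the edges sharing an endpoint with `e`, including `e`), and by symmetry
each edge of `N(e)` is on top for the same number of rankings; hence, summing over all rankings,
`∑_σ ∑_{e ∈ M(σ)} |N(e)| = m · m!`. For a fixed ranking the locally maximal edges form a matching,
the neighbourhoods `N(e)`, `e ∈ M(σ)`, lie in `R(σ)`, and every edge meets at most two edges of a
matching, so `∑_{e ∈ M(σ)} |N(e)| ≤ 2 |R(σ)|`.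
-/

open Finset

section Argmax

variable {α β : Type*} [Fintype α] [DecidableEq α] [Fintype β] [DecidableEq β] [LinearOrder β]

def argmaxRankings (s : Finset α) (a : α) : Finset (α ≃ β) :=
  univ.filter fun σ => ∀ b ∈ s, b ≠ a → σ b < σ a

lemma swap_trans_mem_argmaxRankings {s : Finset α} {a b : α} (hb : b ∈ s) {σ : α ≃ β}
    (hσ : σ ∈ argmaxRankings s a) : (Equiv.swap a b).trans σ ∈ argmaxRankings s b := by
  simp only [argmaxRankings, mem_filter, mem_univ, true_and, Equiv.trans_apply,
    Equiv.swap_apply_right] at hσ ⊢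
  intro x hx hxb
  by_cases hxa : x = a
  · subst hxa
    rw [Equiv.swap_apply_left]
    exact hσ b hb hxb.symm
  · rw [Equiv.swap_apply_of_ne_of_ne hxa hxb]
    exact hσ x hx hxa

lemma card_argmaxRankings_eq {s : Finset α} {a b : α} (ha : a ∈ s) (hb : b ∈ s) :
    #(argmaxRankings (β := β) s a) = #(argmaxRankings (β := β) s b) :=
  card_nbij' (fun σ => (Equiv.swap a b).trans σ) (fun σ => (Equiv.swap b a).trans σ)
    (fun _ hσ => swap_trans_mem_argmaxRankings hb hσ)
    (fun _ hσ => swap_trans_mem_argmaxRankings ha hσ)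
    (fun σ _ => by ext x; simp [Equiv.swap_comm a b])
    (fun σ _ => by ext x; simp [Equiv.swap_comm a b])

lemma exists_mem_argmaxRankings {s : Finset α} (hs : s.Nonempty) (σ : α ≃ β) :
    ∃ a ∈ s, σ ∈ argmaxRankings s a := by
  obtain ⟨a, ha, hmax⟩ := exists_max_image s σ hs
  refine ⟨a, ha, mem_filter.2 ⟨mem_univ _, fun b hb hba => ?_⟩⟩
  exact (hmax b hb).lt_of_ne (σ.injective.ne hba)

lemma card_mul_card_argmaxRankings {s : Finset α} {a : α} (ha : a ∈ s) :
    #s * #(argmaxRankings (β := β) s a) = Fintype.card (α ≃ β) := by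
  have hdisj : (s : Set α).PairwiseDisjoint (argmaxRankings s : α → Finset (α ≃ β)) := by
    intro b hb c hc hbc
    refine disjoint_left.2 fun σ hσb hσc => ?_
    simp only [argmaxRankings, mem_filter] at hσb hσc
    exact lt_asymm (hσb.2 c hc (Ne.symm hbc)) (hσc.2 b hb hbc)
  have hcover : s.biUnion (argmaxRankings s) = (univ : Finset (α ≃ β)) :=
    eq_univ_of_forall fun σ => mem_biUnion.2 (exists_mem_argmaxRankings ⟨a, ha⟩ σ)
  rw [← card_univ, ← hcover, card_biUnion hdisj]
  exact (sum_const_nat fun b hb => card_argmaxRankings_eq hb ha).symm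

end Argmax

section Matching

variable {α : Type*}

lemma shareEndpoint_comm {e f : Sym2 α} : shareEndpoint e f ↔ shareEndpoint f e :=
  ⟨fun ⟨v, he, hf⟩ => ⟨v, hf, he⟩, fun ⟨v, hf, he⟩ => ⟨v, he, hf⟩⟩

lemma shareEndpoint_self (e : Sym2 α) : shareEndpoint e e := by
  induction e using Sym2.ind with
  | _ x y => exact ⟨x, Sym2.mem_mk_left x y, Sym2.mem_mk_left x y⟩

lemma card_filter_shareEndpoint_le_two {M : Finset (Sym2 α)}
    (hM : ∀ e ∈ M, ∀ e' ∈ M, shareEndpoint e e' → e = e') (f : Sym2 α) :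
    #(M.filter (shareEndpoint · f)) ≤ 2 := by
  induction f using Sym2.ind with
  | _ u v =>
    have hthrough (w : α) : #(M.filter (w ∈ ·)) ≤ 1 := card_le_one.2 fun e he e' he' => by
      simp only [mem_filter] at he he'
      exact hM e he.1 e' he'.1 ⟨w, he.2, he'.2⟩
    have hsub : M.filter (shareEndpoint · s(u, v)) ⊆ M.filter (u ∈ ·) ∪ M.filter (v ∈ ·) := by
      intro e he
      obtain ⟨heM, w, hwe, hw⟩ := mem_filter.1 he
      rcases Sym2.mem_iff.1 hw with rfl | rfl <;> simp [heM, hwe]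
    calc #(M.filter (shareEndpoint · s(u, v)))
        ≤ #(M.filter (u ∈ ·) ∪ M.filter (v ∈ ·)) := card_le_card hsub
      _ ≤ 1 + 1 := (card_union_le _ _).trans (add_le_add (hthrough u) (hthrough v))

end Matching

section LocalMax

noncomputable def edgeNbhd (G : SimpleGraph V) [DecidableRel G.Adj] (e : Sym2 V) :
    Finset (Sym2 V) :=
  G.edgeFinset.filter (shareEndpoint e)

variable {G : SimpleGraph V} [DecidableRel G.Adj]

lemma rk_coe (σ : EdgeRanking G) (e : {e // e ∈ G.edgeFinset}) : rk G σ e = σ e := by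
  rw [rk, dif_pos e.2]

lemma locMaxR.eq_of_shareEndpoint {σ : EdgeRanking G} {e f : Sym2 V} (he : locMaxR G σ e)
    (hf : locMaxR G σ f) (hef : shareEndpoint e f) : e = f := by
  by_contra hne
  exact lt_asymm (he.2 f hf.1 (Ne.symm hne) hef) (hf.2 e he.1 hne (shareEndpoint_comm.1 hef))

lemma edgeNbhd_subset_removedR {σ : EdgeRanking G} {e : Sym2 V} (he : locMaxR G σ e) :
    edgeNbhd G e ⊆ removedR G σ := fun f hf => by
  obtain ⟨hfG, hef⟩ := mem_filter.1 hf
  exact mem_filter.2 ⟨hfG, e, he, hef⟩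

lemma sum_card_edgeNbhd_le (σ : EdgeRanking G) :
    ∑ e ∈ G.edgeFinset.filter (locMaxR G σ), #(edgeNbhd G e) ≤ 2 * #(removedR G σ) := by
  set M := G.edgeFinset.filter (locMaxR G σ)
  have hM : ∀ e ∈ M, locMaxR G σ e := fun e he => (mem_filter.1 he).2
  calc ∑ e ∈ M, #(edgeNbhd G e)
      = ∑ e ∈ M, #((removedR G σ).bipartiteAbove shareEndpoint e) := by
        refine sum_congr rfl fun e he => congrArg card (ext fun f => ?_)
        rw [mem_bipartiteAbove]
        exact ⟨fun hf => ⟨edgeNbhd_subset_removedR (hM e he) hf, (mem_filter.1 hf).2⟩,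
          fun ⟨hfR, hef⟩ => mem_filter.2 ⟨(mem_filter.1 hfR).1, hef⟩⟩
    _ = ∑ f ∈ removedR G σ, #(M.bipartiteBelow shareEndpoint f) :=
        sum_card_bipartiteAbove_eq_sum_card_bipartiteBelow _
    _ ≤ ∑ _f ∈ removedR G σ, 2 := sum_le_sum fun f _ =>
        card_filter_shareEndpoint_le_two
          (fun e he e' he' => (hM e he).eq_of_shareEndpoint (hM e' he')) f
    _ = 2 * #(removedR G σ) := by rw [sum_const, smul_eq_mul, mul_comm]

lemma locMaxR_iff_mem_argmaxRankings (σ : EdgeRanking G) (e : {e // e ∈ G.edgeFinset}) :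
    locMaxR G σ e ↔ σ ∈ argmaxRankings ((edgeNbhd G e).subtype (· ∈ G.edgeFinset)) e := by
  simp only [locMaxR, argmaxRankings, edgeNbhd, mem_filter, mem_univ, true_and, mem_subtype,
    e.2, Subtype.forall, Fin.lt_def, ← rk_coe, ne_eq, Subtype.ext_iff]
  exact ⟨fun h f hf hfe hne => h f hf hne hfe.2, fun h f hf hne hef => h f hf ⟨hf, hef⟩ hne⟩

lemma card_edgeNbhd_mul_card_locMaxR {e : Sym2 V} (he : e ∈ G.edgeFinset) :
    #(edgeNbhd G e) * #(univ.filter fun σ : EdgeRanking G => locMaxR G σ e) =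
      Fintype.card (EdgeRanking G) := by
  have hcard : #((edgeNbhd G e).subtype (· ∈ G.edgeFinset)) = #(edgeNbhd G e) := by
    rw [card_subtype, filter_true_of_mem fun f (hf : f ∈ edgeNbhd G e) => filter_subset _ _ hf]
  have hlocMax : univ.filter (fun σ : EdgeRanking G => locMaxR G σ e) =
      argmaxRankings ((edgeNbhd G e).subtype (· ∈ G.edgeFinset)) ⟨e, he⟩ := by
    ext σ
    rw [mem_filter, locMaxR_iff_mem_argmaxRankings σ ⟨e, he⟩]
    exact and_iff_right (mem_univ σ)
  rw [← hcard, hlocMax]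
  exact card_mul_card_argmaxRankings (mem_subtype.2 (mem_filter.2 ⟨he, shareEndpoint_self e⟩))

lemma sum_sum_card_edgeNbhd :
    ∑ σ : EdgeRanking G, ∑ e ∈ G.edgeFinset.filter (locMaxR G σ), #(edgeNbhd G e) =
      #G.edgeFinset * Fintype.card (EdgeRanking G) := by
  simp_rw [sum_filter]
  rw [sum_comm, ← smul_eq_mul, ← sum_const]
  refine sum_congr rfl fun e he => ?_
  rw [← card_edgeNbhd_mul_card_locMaxR he, ← sum_filter, sum_const, smul_eq_mul, mul_comm]

lemma card_edgeFinset_mul_card_edgeRanking_le :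
    #G.edgeFinset * Fintype.card (EdgeRanking G) ≤ 2 * ∑ σ : EdgeRanking G, #(removedR G σ) := by
  rw [← sum_sum_card_edgeNbhd, mul_sum]
  exact sum_le_sum fun σ _ => sum_card_edgeNbhd_le σ

end LocalMax

theorem stmt0_general (G : SimpleGraph V) [DecidableRel G.Adj] :
    (G.edgeFinset.card : ℝ) / 2 ≤
      (∑ σ : EdgeRanking G, ((removedR G σ).card : ℝ)) /
        (Fintype.card (EdgeRanking G) : ℝ) := by
  have hpos : (0 : ℝ) < Fintype.card (EdgeRanking G) := by
    exact_mod_cast Fintype.card_pos_iff.2 ⟨G.edgeFinset.equivFin⟩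
  have hcount : (#G.edgeFinset * Fintype.card (EdgeRanking G) : ℝ) ≤
      2 * ∑ σ : EdgeRanking G, (#(removedR G σ) : ℝ) := by
    exact_mod_cast card_edgeFinset_mul_card_edgeRanking_le
  rw [div_le_div_iff₀ two_pos hpos]
  linarith

/-- For a finite simple graph `G` with `m ≥ 1` edges, under a
uniformly random ranking of the edges, the expected number of removed edges is
at least `m / 2`. -/
theorem stmt0 (G : SimpleGraph V) [DecidableRel G.Adj] (hm : 1 ≤ G.edgeFinset.card) :
    (G.edgeFinset.card : ℝ) / 2 ≤
      (∑ σ : EdgeRanking G, ((removedR G σ).card : ℝ)) /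
        (Fintype.card (EdgeRanking G) : ℝ) :=
  stmt0_general G
end

section
/- Let G be a finite simple graph and w an injective weight function on E(G). If G_k has no edges for some k, then the output M = ∪_{i<k} M_i of the iterated local max algorithm is a maximal matching of G: M is a matching and every edge of G either belongs to M or shares an endpoint with some edge of M. -/
/-- An edge `e` of the subgraph with edge set `E` is locally maximal in it:
`e ∈ E` and `w e > w f` for every other edge `f ∈ E` sharing an endpoint with `e`. -/
def locMaxIn {V : Type*} (w : Sym2 V → ℝ) (E : Set (Sym2 V)) (e : Sym2 V) : Prop :=
  e ∈ E ∧ ∀ f ∈ E, f ≠ e → shareEndpoint e f → w f < w e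

/-- One round of the local max algorithm: remove every edge sharing an endpoint with
some locally maximal edge (including the locally maximal edges themselves). -/
def stepSet {V : Type*} (w : Sym2 V → ℝ) (E : Set (Sym2 V)) : Set (Sym2 V) :=
  {f ∈ E | ¬ ∃ e, locMaxIn w E e ∧ shareEndpoint e f}

/-- The edge set of the graph `G_i` after `i` rounds of the local max algorithm. -/
def Eseq {V : Type*} (G : SimpleGraph V) (w : Sym2 V → ℝ) : ℕ → Set (Sym2 V)
  | 0 => G.edgeSet
  | n + 1 => stepSet w (Eseq G w n)

/-- The set `M_i` of edges matched in round `i`: the locally maximal edges of `G_i`. -/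
def Mi {V : Type*} (G : SimpleGraph V) (w : Sym2 V → ℝ) (i : ℕ) : Set (Sym2 V) :=
  {e | locMaxIn w (Eseq G w i) e}

section LocalMax

variable {V : Type*} {G : SimpleGraph V} {w : Sym2 V → ℝ}

theorem shareEndpoint.symm {e f : Sym2 V} (h : shareEndpoint e f) : shareEndpoint f e :=
  let ⟨v, he, hf⟩ := h
  ⟨v, hf, he⟩

theorem locMaxIn.not_shareEndpoint {E : Set (Sym2 V)} {e f : Sym2 V} (he : locMaxIn w E e)
    (hf : locMaxIn w E f) (hne : e ≠ f) : ¬ shareEndpoint e f := fun h =>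
  (he.2 f hf.1 hne.symm h).asymm (hf.2 e he.1 hne h.symm)

theorem stepSet_subset (E : Set (Sym2 V)) : stepSet w E ⊆ E := fun _ hf => hf.1

theorem Eseq_antitone : Antitone (Eseq G w) :=
  antitone_nat_of_succ_le fun _ => stepSet_subset _

theorem Mi_subset_Eseq (i : ℕ) : Mi G w i ⊆ Eseq G w i := fun _ he => he.1

theorem not_shareEndpoint_of_mem_Mi_of_lt {i j : ℕ} (hij : i < j) {e f : Sym2 V}
    (he : e ∈ Mi G w i) (hf : f ∈ Mi G w j) : ¬ shareEndpoint e f := fun h =>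
  (Eseq_antitone (Nat.succ_le_of_lt hij) (Mi_subset_Eseq j hf)).2 ⟨e, he, h⟩

theorem not_shareEndpoint_of_mem_Mi {i j : ℕ} {e f : Sym2 V} (he : e ∈ Mi G w i)
    (hf : f ∈ Mi G w j) (hne : e ≠ f) : ¬ shareEndpoint e f := by
  rcases lt_trichotomy i j with hij | rfl | hji
  · exact not_shareEndpoint_of_mem_Mi_of_lt hij he hf
  · exact locMaxIn.not_shareEndpoint he hf hne
  · exact fun h => not_shareEndpoint_of_mem_Mi_of_lt hji hf he h.symm

theorem exists_locMaxIn_shareEndpoint_of_notMem_stepSet {E : Set (Sym2 V)} {e : Sym2 V}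
    (he : e ∈ E) (hstep : e ∉ stepSet w E) : ∃ f, locMaxIn w E f ∧ shareEndpoint f e :=
  not_not.mp fun h => hstep ⟨he, h⟩

theorem exists_mem_notMem_succ {α : Type*} (s : ℕ → Set α) {x : α} (h0 : x ∈ s 0) :
    ∀ {k : ℕ}, x ∉ s k → ∃ i < k, x ∈ s i ∧ x ∉ s (i + 1)
  | 0, hk => absurd h0 hk
  | k + 1, hk => by
    by_cases hxk : x ∈ s k
    · exact ⟨k, k.lt_succ_self, hxk, hk⟩
    · obtain ⟨i, hik, hi⟩ := exists_mem_notMem_succ s h0 hxk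
      exact ⟨i, hik.trans k.lt_succ_self, hi⟩

theorem exists_mem_Mi_shareEndpoint {k : ℕ} {e : Sym2 V} (he : e ∈ G.edgeSet)
    (hk : e ∉ Eseq G w k) : ∃ i < k, ∃ f ∈ Mi G w i, shareEndpoint f e := by
  obtain ⟨i, hik, hei, hnext⟩ := exists_mem_notMem_succ (Eseq G w) he hk
  obtain ⟨f, hf, hfe⟩ := exists_locMaxIn_shareEndpoint_of_notMem_stepSet hei hnext
  exact ⟨i, hik, f, hf, hfe⟩

end LocalMax

theorem stmt9_general {V : Type*} (G : SimpleGraph V) (w : Sym2 V → ℝ)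
    (k : ℕ) (hk : Eseq G w k = ∅) :
    (∀ e ∈ ⋃ i < k, Mi G w i, ∀ f ∈ ⋃ i < k, Mi G w i, e ≠ f → ¬ shareEndpoint e f) ∧
    (∀ e ∈ G.edgeSet, e ∈ ⋃ i < k, Mi G w i ∨
      ∃ f ∈ ⋃ i < k, Mi G w i, shareEndpoint e f) := by
  simp only [Set.mem_iUnion, exists_prop]
  refine ⟨fun e ⟨i, _, he⟩ f ⟨j, _, hf⟩ hne => not_shareEndpoint_of_mem_Mi he hf hne, ?_⟩
  intro e he
  obtain ⟨i, hik, f, hf, hfe⟩ := exists_mem_Mi_shareEndpoint he (hk ▸ Set.notMem_empty e)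
  by_cases hfe_eq : f = e
  · exact Or.inl ⟨i, hik, hfe_eq ▸ hf⟩
  · exact Or.inr ⟨f, ⟨i, hik, hf⟩, hfe.symm⟩

/-- If `G_k` has no edges for some `k`, then `M = ∪_{i<k} M_i` is a
maximal matching of `G`: it is a matching, and every edge of `G` either belongs to
`M` or shares an endpoint with some edge of `M`. -/
theorem stmt9 {V : Type*} [Fintype V] (G : SimpleGraph V) (w : Sym2 V → ℝ)
    (hinj : Set.InjOn w G.edgeSet) (k : ℕ) (hk : Eseq G w k = ∅) :
    (∀ e ∈ ⋃ i < k, Mi G w i, ∀ f ∈ ⋃ i < k, Mi G w i, e ≠ f → ¬ shareEndpoint e f) ∧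
    (∀ e ∈ G.edgeSet, e ∈ ⋃ i < k, Mi G w i ∨
      ∃ f ∈ ⋃ i < k, Mi G w i, shareEndpoint e f) :=
  stmt9_general G w k hk
end
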